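/- Let V* be a ℤ-graded finite-dimensional real vector space, nonzero in at least two distinct degrees, and let hom*(V_S, V_S) := hom*(V*,V*) ⊕ hom*(V*,V*)[−2] with the differential sending (t₀, t₁) to (0, 0). Then there exist integers m and l with l ≥ 4 such that the cohomologies Homᵐ(V_S, V_S) and Homᵐ⁺ˡ(V_S, V_S) are both nonzero. -/
import Mathlib


open DirectSum

/-- The graded hom space: homⁿ(V*, V*) = ⊕ᵢ Hom(Vⁱ, Vⁱ⁺ⁿ). -/
abbrev gradedHom (V : ℤ → Type)
    [∀ i, AddCommGroup (V i)] [∀ i, Module ℝ (V i)] (n : ℤ) : Type :=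
  ⨁ i : ℤ, (V i →ₗ[ℝ] V (i + n))

/-- Degree-m piece of hom*(V_S,V_S) = hom*(V*,V*) ⊕ hom*(V*,V*)[−2],
i.e. homᵐ(V*,V*) ⊕ homᵐ⁻²(V*,V*). -/
abbrev homVS (V : ℤ → Type)
    [∀ i, AddCommGroup (V i)] [∀ i, Module ℝ (V i)] (m : ℤ) : Type :=
  gradedHom V m × gradedHom V (m - 2)

lemma exists_nonzero_linearMap (A B : Type)
    [AddCommGroup A] [Module ℝ A] [AddCommGroup B] [Module ℝ B]
    [FiniteDimensional ℝ A] [Nontrivial A] [Nontrivial B] :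
    ∃ f : A →ₗ[ℝ] B, f ≠ 0 := by
  obtain ⟨w, hw⟩ := exists_ne (0 : B)
  have hpos : 0 < Module.finrank ℝ A := Module.finrank_pos
  let b := Module.finBasis ℝ A
  refine ⟨(b.coord ⟨0, hpos⟩).smulRight w, fun h => hw ?_⟩
  have := congrArg (fun f => f (b ⟨0, hpos⟩)) h
  simpa using this

lemma gradedHom_nontrivial (V : ℤ → Type)
    [∀ i, AddCommGroup (V i)] [∀ i, Module ℝ (V i)] [∀ i, FiniteDimensional ℝ (V i)]
    (m i : ℤ) (h1 : Nontrivial (V i)) (h2 : Nontrivial (V (i + m))) :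
    Nontrivial (gradedHom V m) := by
  obtain ⟨f, hf⟩ := exists_nonzero_linearMap (V i) (V (i + m))
  refine nontrivial_of_ne (DirectSum.of (fun j => V j →ₗ[ℝ] V (j + m)) i f) 0 ?_
  intro h
  apply hf
  apply DirectSum.of_injective i
  rw [map_zero]
  exact h

lemma homVS_nontrivial_left (V : ℤ → Type)
    [∀ i, AddCommGroup (V i)] [∀ i, Module ℝ (V i)] (m : ℤ)
    (h : Nontrivial (gradedHom V m)) : Nontrivial (homVS V m) := by
  obtain ⟨a, b, hab⟩ := h
  exact ⟨(a, 0), (b, 0), by simpa using hab⟩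

lemma homVS_nontrivial_right (V : ℤ → Type)
    [∀ i, AddCommGroup (V i)] [∀ i, Module ℝ (V i)] (m : ℤ)
    (h : Nontrivial (gradedHom V (m - 2))) : Nontrivial (homVS V m) := by
  obtain ⟨a, b, hab⟩ := h
  exact ⟨(0, a), (0, b), by simpa using hab⟩

/-- If a bounded graded vector space V* is nonzero in two distinct degrees n and n+k
(k ≥ 1), then (since the differential of hom*(V_S,V_S) is zero, cohomology equals the
cochain groups) there are m, l with l ≥ 4 such that Homᵐ(V_S,V_S) and Homᵐ⁺ˡ(V_S,V_S)
are both nonzero. -/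
theorem stmt_10 (V : ℤ → Type)
    [∀ i, AddCommGroup (V i)] [∀ i, Module ℝ (V i)] [∀ i, FiniteDimensional ℝ (V i)]
    (s : Finset ℤ) (hs : ∀ i ∉ s, Subsingleton (V i))
    (n k : ℤ) (hk : 1 ≤ k)
    (hn : Nontrivial (V n)) (hnk : Nontrivial (V (n + k))) :
    ∃ m l : ℤ, 4 ≤ l ∧ Nontrivial (homVS V m) ∧ Nontrivial (homVS V (m + l)) := by
  refine ⟨-k, 2 * k + 2, by linarith, ?_, ?_⟩
  · -- first component: gradedHom V (-k), witness at i = n + k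
    refine homVS_nontrivial_left V (-k) ?_
    refine gradedHom_nontrivial V (-k) (n + k) hnk ?_
    rw [show n + k + -k = n by ring]; exact hn
  · -- second component: degree (-k + (2k+2)) - 2 = k, witness at i = n
    refine homVS_nontrivial_right V (-k + (2 * k + 2)) ?_
    refine gradedHom_nontrivial V (-k + (2 * k + 2) - 2) n hn ?_
    rw [show n + (-k + (2 * k + 2) - 2) = n + k by ring]; exact hnk
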